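/- For a decomposable score and any node set V with |V| ≥ 1, the best score over all DAGs on V satisfies the recursion: bestScore(V) = max over s ∈ V of [bestScore(V \ {s}) + max over g ⊆ V \ {s} of localscore(s, g)]. -/

import Mathlib

/-!
Every DAG on a nonempty node set has a sink `s`, a node that is nobody's parent. Deleting `s`
leaves a DAG on `V \ {s}`, and conversely any DAG on `V \ {s}` extended by an arbitrary parent
set `g ⊆ V \ {s}` for `s` is a DAG on `V`, because `s` cannot lie on a cycle. Since the score
decomposes as the score on `V \ {s}` plus `localscore s g`, maximizing over the sink `s`, the
DAG on `V \ {s}` and the parent set `g` gives the recursion.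
-/

/-- `G` is a DAG on the node set `V`: each node's parents lie in `V` (excluding itself),
and there is no directed cycle. -/
def DAGon {α : Type*} [DecidableEq α] (V : Finset α) (G : α → Finset α) : Prop :=
  (∀ v ∈ V, G v ⊆ V.erase v) ∧ (∀ v ∉ V, G v = ∅) ∧
    ∀ v, ¬ Relation.TransGen (fun u w : α => u ∈ G w) v v

/-- The best (supremum) score over all DAGs on `V` with decomposable score. -/
noncomputable def bestScore {α : Type*} [DecidableEq α]
    (localscore : α → Finset α → ℝ) (V : Finset α) : ℝ :=
  sSup {x : ℝ | ∃ G : α → Finset α, DAGon V G ∧ x = ∑ v ∈ V, localscore v (G v)}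

open Finset Function Relation

section Acyclic

variable {α : Type*}

theorem Finset.exists_forall_not_rel_of_acyclic {r : α → α → Prop} {V : Finset α}
    (hV : V.Nonempty) (hmem : ∀ a b, r a b → b ∈ V) (hacyc : ∀ a, ¬ TransGen r a a) :
    ∃ s ∈ V, ∀ b, ¬ r s b := by
  classical
  -- A node with the most ancestors in `V` is a sink: a child would have strictly more.
  obtain ⟨s, hs, hmax⟩ := V.exists_max_image (fun s => #{u ∈ V | TransGen r u s}) hV
  refine ⟨s, hs, fun b hsb => ?_⟩
  have hlt : {u ∈ V | TransGen r u s} ⊂ {u ∈ V | TransGen r u b} := by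
    refine (ssubset_iff_of_subset (monotone_filter_right V fun _ _ hu => hu.tail hsb)).2
      ⟨s, mem_filter.2 ⟨hs, .single hsb⟩, fun h => hacyc s (mem_filter.1 h).2⟩
  exact (hmax b (hmem s b hsb)).not_gt (card_lt_card hlt)

theorem Relation.TransGen.of_forall_not_rel_left {r r' : α → α → Prop} {s a b : α}
    (hs : ∀ w, ¬ r' s w) (hr : ∀ u w, w ≠ s → r' u w → r u w) (h : TransGen r' a b)
    (hb : b ≠ s) : TransGen r a b := by
  induction h with
  | single hab => exact .single (hr _ _ hb hab)
  | @tail c _ _ hcb ih =>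
    have hc : c ≠ s := by rintro rfl; exact hs _ hcb
    exact (ih hc).tail (hr _ _ hb hcb)

theorem Relation.not_transGen_self_of_forall_not_rel_left {r r' : α → α → Prop} {s : α}
    (hs : ∀ w, ¬ r' s w) (hr : ∀ u w, w ≠ s → r' u w → r u w)
    (hacyc : ∀ a, ¬ TransGen r a a) (a : α) : ¬ TransGen r' a a := by
  intro h
  obtain ⟨b, hab, -⟩ := TransGen.head'_iff.1 h
  have ha : a ≠ s := by rintro rfl; exact hs b hab
  exact hacyc a (h.of_forall_not_rel_left hs hr ha)

end Acyclic

namespace DAGon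

variable {α : Type*} [DecidableEq α] {V : Finset α} {G : α → Finset α} {s : α}

theorem const_empty (V : Finset α) : DAGon V fun _ => ∅ := by
  refine ⟨fun _ _ => empty_subset _, fun _ _ => rfl, fun v h => ?_⟩
  obtain ⟨_, h, -⟩ := TransGen.head'_iff.1 h
  exact notMem_empty _ h

theorem exists_sink (hG : DAGon V G) (hV : V.Nonempty) : ∃ s ∈ V, ∀ v, s ∉ G v :=
  V.exists_forall_not_rel_of_acyclic hV
    (fun u w hu => by_contra fun hw => notMem_empty u (hG.2.1 w hw ▸ hu)) hG.2.2

theorem erase_sink (hG : DAGon V G) (hsink : ∀ v, s ∉ G v) :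
    DAGon (V.erase s) (update G s ∅) := by
  have hsub : ∀ w, update G s ∅ w ⊆ G w := fun w => by
    rcases eq_or_ne w s with rfl | hws
    · simp
    · rw [update_of_ne hws]
  refine ⟨fun v hv => ?_, fun v hv => ?_,
    fun v h => hG.2.2 v (TransGen.mono (fun u w hu => hsub w hu) _ _ h)⟩
  · rw [update_of_ne (ne_of_mem_erase hv), erase_right_comm]
    exact subset_erase.2 ⟨hG.1 v (mem_of_mem_erase hv), hsink v⟩
  · rcases eq_or_ne v s with rfl | hvs
    · simp
    · rw [update_of_ne hvs]
      exact hG.2.1 v fun hvV => hv (mem_erase.2 ⟨hvs, hvV⟩)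

theorem update_of_subset_erase (hG : DAGon (V.erase s) G) (hs : s ∈ V) {g : Finset α}
    (hg : g ⊆ V.erase s) : DAGon V (update G s g) := by
  have hupdate : ∀ v, v ≠ s → update G s g v = G v := fun v hvs => update_of_ne hvs _ _
  have hsink : ∀ w, s ∉ update G s g w := fun w hw => by
    rcases eq_or_ne w s with rfl | hws
    · exact notMem_erase w V (hg (by simpa using hw))
    · rw [hupdate w hws] at hw
      by_cases hwV : w ∈ V.erase s
      · exact (mem_erase.1 (mem_of_mem_erase (hG.1 w hwV hw))).1 rfl
      · exact notMem_empty s (hG.2.1 w hwV ▸ hw)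
  refine ⟨fun v hv => ?_, fun v hv => ?_, ?_⟩
  · rcases eq_or_ne v s with rfl | hvs
    · simpa using hg
    · rw [hupdate v hvs]
      exact (hG.1 v (mem_erase.2 ⟨hvs, hv⟩)).trans
        (erase_right_comm (a := s) ▸ erase_subset _ _)
  · have hvs : v ≠ s := by rintro rfl; exact hv hs
    rw [hupdate v hvs]
    exact hG.2.1 v fun h => hv (mem_of_mem_erase h)
  · exact not_transGen_self_of_forall_not_rel_left hsink
      (fun u w hws hu => by rwa [hupdate w hws] at hu) hG.2.2

end DAGon

section BestScore

variable {α : Type*} [DecidableEq α] (localscore : α → Finset α → ℝ) {V : Finset α}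
  {G : α → Finset α} {s : α}

theorem score_le_bestScore (hG : DAGon V G) :
    ∑ v ∈ V, localscore v (G v) ≤ bestScore localscore V := by
  refine le_csSup ⟨∑ v ∈ V, (V.erase v).powerset.sup' ⟨∅, empty_mem_powerset _⟩ (localscore v),
    ?_⟩ ⟨G, hG, rfl⟩
  rintro _ ⟨G', hG', rfl⟩
  exact sum_le_sum fun v hv => le_sup' (localscore v) (mem_powerset.2 (hG'.1 v hv))

theorem bestScore_le {b : ℝ} (h : ∀ G, DAGon V G → ∑ v ∈ V, localscore v (G v) ≤ b) :
    bestScore localscore V ≤ b :=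
  csSup_le ⟨_, fun _ => ∅, DAGon.const_empty V, rfl⟩ fun _ ⟨G, hG, hx⟩ => hx ▸ h G hG

theorem sum_erase_update (G : α → Finset α) (g : Finset α) :
    ∑ v ∈ V.erase s, localscore v (update G s g v) = ∑ v ∈ V.erase s, localscore v (G v) :=
  sum_congr rfl fun v hv => by rw [update_of_ne (ne_of_mem_erase hv)]

theorem score_le_bestScore_erase_add (hG : DAGon V G) (hs : s ∈ V)
    (hsink : ∀ v, s ∉ G v) :
    ∑ v ∈ V, localscore v (G v) ≤ bestScore localscore (V.erase s) + localscore s (G s) := by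
  rw [← sum_erase_add V _ hs, ← sum_erase_update localscore G ∅]
  exact add_le_add_left (score_le_bestScore localscore (hG.erase_sink hsink)) _

theorem bestScore_erase_add_le (hs : s ∈ V) {g : Finset α} (hg : g ⊆ V.erase s) :
    bestScore localscore (V.erase s) + localscore s g ≤ bestScore localscore V := by
  rw [← le_sub_iff_add_le]
  refine bestScore_le localscore fun G hG => le_sub_iff_add_le.2 ?_
  calc ∑ v ∈ V.erase s, localscore v (G v) + localscore s g
      = ∑ v ∈ V, localscore v (update G s g v) := by
        rw [← sum_erase_add V _ hs, sum_erase_update, update_self]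
    _ ≤ bestScore localscore V := score_le_bestScore localscore (hG.update_of_subset_erase hs hg)

end BestScore

theorem stmt_6 {α : Type*} [DecidableEq α] (localscore : α → Finset α → ℝ)
    (V : Finset α) (hV : V.Nonempty) :
    bestScore localscore V =
      V.sup' hV (fun s =>
        bestScore localscore (V.erase s) +
          (V.erase s).powerset.sup' ⟨∅, Finset.empty_mem_powerset _⟩ (localscore s)) := by
  apply le_antisymm
  · refine bestScore_le localscore fun G hG => ?_
    obtain ⟨s, hs, hsink⟩ := hG.exists_sink hV
    refine (score_le_bestScore_erase_add localscore hG hs hsink).trans (le_sup'_of_le _ hs ?_)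
    exact add_le_add_right (le_sup' (localscore s) (mem_powerset.2 (hG.1 s hs))) _
  · refine sup'_le _ _ fun s hs => ?_
    obtain ⟨g, hg, hmax⟩ := exists_mem_eq_sup' ⟨∅, empty_mem_powerset _⟩ (localscore s)
    rw [hmax]
    exact bestScore_erase_add_le localscore hs (mem_powerset.1 hg)
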